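/- arXiv:2512.24236 — 2 statements merged into one kernel-verified Lean document; each statement's English description precedes it below -/
import Mathlib

section
/- Let α > 0, (x,y) ∈ ℂ²∖{(0,0)}, s := |x|² + |y|², a := √((2α + s)/s), and set v := a·(x, y)ᵀ (a column vector) and w := (y, −x) (a row vector). Then w(v) = 0 and |v|² − |w|² = 2α; consequently, the associated map 𝔄(λ) := −λ⁻¹(v·w)₀ + (v·vᴴ − wᴴ·w)₀ + λ·((v·w)₀)ᴴ satisfies det 𝔄(λ) = −α² and tr 𝔄(λ) = 0 for all λ ∈ ℂ∖{0}, and (𝔄(−1/λ̄))ᴴ = 𝔄(λ). -/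
/-! `𝔄(λ) = −λ⁻¹N + H + λNᴴ` with `N`, `H` traceless and `H` Hermitian, so `tr 𝔄 = 0` and the
reality condition hold for all `v`, `w`. When `w(v) = 0`, `N = v·w` is already traceless and
nilpotent, and expanding the determinant gives `det 𝔄(λ) = −((|v|² − |w|²)/2)²` for every `λ ≠ 0`;
the factor `a` is chosen so that `|v|² − |w|² = (a² − 1)s = 2α`. -/

open Complex ComplexConjugate Matrix

noncomputable section

/-- The traceless part `M₀ = M − ½(tr M)·I` of a 2×2 complex matrix. -/
def tl (M : Matrix (Fin 2) (Fin 2) ℂ) : Matrix (Fin 2) (Fin 2) ℂ :=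
  M - (M.trace / 2) • (1 : Matrix (Fin 2) (Fin 2) ℂ)

/-- The outer product `v·w` of a column vector and a row vector. -/
def outer (v w : Fin 2 → ℂ) : Matrix (Fin 2) (Fin 2) ℂ :=
  Matrix.of fun i j => v i * w j

/-- The outer product `v·vᴴ`. -/
def vvH (v : Fin 2 → ℂ) : Matrix (Fin 2) (Fin 2) ℂ :=
  Matrix.of fun i j => v i * conj (v j)

/-- The outer product `wᴴ·w`. -/
def wHw (w : Fin 2 → ℂ) : Matrix (Fin 2) (Fin 2) ℂ :=
  Matrix.of fun i j => conj (w i) * w j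

/-- The loop `𝔄(λ) = −λ⁻¹(v·w)₀ + (v·vᴴ − wᴴ·w)₀ + λ·((v·w)₀)ᴴ`. -/
def frakA (v w : Fin 2 → ℂ) (l : ℂ) : Matrix (Fin 2) (Fin 2) ℂ :=
  -(l⁻¹ • tl (outer v w)) + tl (vvH v - wHw w) + l • (tl (outer v w))ᴴ

lemma trace_tl (M : Matrix (Fin 2) (Fin 2) ℂ) : (tl M).trace = 0 := by
  simp only [tl, trace_sub, trace_smul, trace_one, Fintype.card_fin, smul_eq_mul]
  push_cast
  ring

lemma tl_conjTranspose (M : Matrix (Fin 2) (Fin 2) ℂ) : (tl M)ᴴ = tl Mᴴ := by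
  simp [tl, conjTranspose_sub, conjTranspose_smul, trace_conjTranspose]

lemma tl_of_trace_eq_zero {M : Matrix (Fin 2) (Fin 2) ℂ} (h : M.trace = 0) : tl M = M := by
  simp [tl, h]

lemma trace_outer (v w : Fin 2 → ℂ) : (outer v w).trace = ∑ i, w i * v i := by
  simp [outer, trace, mul_comm]

lemma vvH_sub_wHw_isHermitian (v w : Fin 2 → ℂ) : (vvH v - wHw w).IsHermitian := by
  refine IsHermitian.sub ?_ ?_ <;> ext i j <;> simp [vvH, wHw, mul_comm]

lemma trace_frakA (v w : Fin 2 → ℂ) (l : ℂ) : (frakA v w l).trace = 0 := by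
  simp [frakA, trace_tl, trace_conjTranspose]

lemma frakA_neg_inv_conj_conjTranspose (v w : Fin 2 → ℂ) (l : ℂ) :
    (frakA v w (-(1 / conj l)))ᴴ = frakA v w l := by
  have hH := (vvH_sub_wHw_isHermitian v w).eq
  simp only [frakA, conjTranspose_add, conjTranspose_neg, conjTranspose_smul,
    conjTranspose_conjTranspose, tl_conjTranspose, hH]
  simp only [one_div, inv_neg, inv_inv, star_neg, star_inv₀, RCLike.star_def, conj_conj, neg_smul,
    neg_neg]
  abel

lemma det_frakA (v w : Fin 2 → ℂ) (hwv : ∑ i, w i * v i = 0) {l : ℂ} (hl : l ≠ 0) :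
    (frakA v w l).det =
      -((((∑ i, normSq (v i)) - ∑ i, normSq (w i) : ℝ) : ℂ) / 2) ^ 2 := by
  have hN : tl (outer v w) = outer v w := tl_of_trace_eq_zero (by rw [trace_outer, hwv])
  rw [Fin.sum_univ_two] at hwv
  have hwv' : conj (w 0) * conj (v 0) + conj (w 1) * conj (v 1) = 0 := by
    simpa using congrArg conj hwv
  rw [frakA, hN, det_fin_two]
  simp only [tl, outer, vvH, wHw, trace_fin_two, of_apply, Matrix.add_apply, Matrix.sub_apply,
    Matrix.neg_apply, Matrix.smul_apply, conjTranspose_apply, one_apply_eq, one_apply_ne,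
    zero_ne_one, one_ne_zero, ne_eq, not_false_eq_true, smul_eq_mul, mul_one, mul_zero, sub_zero,
    star_mul', RCLike.star_def, Fin.sum_univ_two, ofReal_sub, ofReal_add, ← mul_conj]
  set nv := v 0 * conj (v 0) + v 1 * conj (v 1)
  set nw := w 0 * conj (w 0) + w 1 * conj (w 1)
  -- The `λ^{±2}` terms cancel identically, the `λ^{±1}` terms are `(nv - nw)/2` times `w(v)` and
  -- its conjugate, and `λλ⁻¹ = 1` turns the rest into `-((nv - nw)/2)²`.
  linear_combination ((nv - nw) / 2 * l⁻¹) * hwv - ((nv - nw) / 2 * l) * hwv' +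
    (nv * nw - (w 0 * v 0 + w 1 * v 1) * (conj (w 0) * conj (v 0) + conj (w 1) * conj (v 1))) *
      mul_inv_cancel₀ hl

/-- For `α > 0`, `(x,y) ≠ (0,0)`, `s = |x|² + |y|²`, `a = √((2α+s)/s)`, `v = a·(x,y)ᵀ`,
`w = (y,−x)`: one has `w(v) = 0` and `|v|² − |w|² = 2α`; consequently the associated loop
`𝔄` satisfies `det 𝔄(λ) = −α²`, `tr 𝔄(λ) = 0` and the reality condition
`(𝔄(−1/λ̄))ᴴ = 𝔄(λ)` for all `λ ≠ 0`. -/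
theorem stmt5 (α : ℝ) (hα : 0 < α) (x y : ℂ) (hxy : (x, y) ≠ (0, 0)) :
    let s : ℝ := Complex.normSq x + Complex.normSq y
    let a : ℝ := Real.sqrt ((2 * α + s) / s)
    let v : Fin 2 → ℂ := ![(a : ℂ) * x, (a : ℂ) * y]
    let w : Fin 2 → ℂ := ![y, -x]
    (∑ i, w i * v i) = 0 ∧
    ((∑ i, Complex.normSq (v i)) - ∑ i, Complex.normSq (w i)) = 2 * α ∧
    ∀ l : ℂ, l ≠ 0 →
      (frakA v w l).det = -(α : ℂ) ^ 2 ∧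
      (frakA v w l).trace = 0 ∧
      (frakA v w (-(1 / conj l)))ᴴ = frakA v w l := by
  intro s a v w
  have hs : 0 < s := by
    have hxy' : x ≠ 0 ∨ y ≠ 0 := by
      contrapose! hxy
      rw [hxy.1, hxy.2]
    rcases hxy' with hx | hy
    · exact add_pos_of_pos_of_nonneg (normSq_pos.2 hx) (normSq_nonneg y)
    · exact add_pos_of_nonneg_of_pos (normSq_nonneg x) (normSq_pos.2 hy)
  have ha : a ^ 2 * s = 2 * α + s := by
    rw [Real.sq_sqrt (by positivity), div_mul_cancel₀ _ hs.ne']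
  have hwv : ∑ i, w i * v i = 0 := by
    simp only [v, w, Fin.sum_univ_two, cons_val_zero, cons_val_one, cons_val_fin_one]
    ring
  have hnorm : (∑ i, normSq (v i)) - ∑ i, normSq (w i) = 2 * α := by
    simp only [v, w, Fin.sum_univ_two, cons_val_zero, cons_val_one, cons_val_fin_one, normSq_mul,
      normSq_ofReal, normSq_neg]
    linear_combination ha
  refine ⟨hwv, hnorm, fun l hl =>
    ⟨?_, trace_frakA v w l, frakA_neg_inv_conj_conjTranspose v w l⟩⟩
  rw [det_frakA v w hwv hl, hnorm]
  push_cast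
  ring
end
end

section
/- Let α > 0 and (x,y) ∈ ℂ²∖{(0,0)}, s := |x|² + |y|². The matrix M := (α/s)·[[|x|² − |y|², 2x·conj(y)], [2y·conj(x), |y|² − |x|²]] satisfies: Mᴴ = M, tr M = 0, det M = −α², and M·(x,y)ᵀ = α·(x,y)ᵀ. Moreover, for r > 0 set a_r := √((2α + r²s)/s), v_r := a_r·(x,y)ᵀ, w_r := r·(y, −x), and let 𝔄_r(λ) := −λ⁻¹(v_r·w_r)₀ + (v_r·v_rᴴ − w_rᴴ·w_r)₀ + λ·((v_r·w_r)₀)ᴴ. Then for each fixed λ ∈ ℂ∖{0}, 𝔄_r(λ) → M as r → 0⁺. -/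
open Complex ComplexConjugate Matrix

noncomputable section

/-!
Write `u = (x, y)ᵀ`, so that `s = ‖u‖² = tr (u·uᴴ)` and `M = (2α/s)·(u·uᴴ)₀`. The traceless part
of the Hermitian rank-one matrix `u·uᴴ` is Hermitian, has `u` as eigenvector with eigenvalue `s/2`
and has determinant `−s²/4`; this gives the algebraic claims. The loop `𝔄_r(λ)` depends
continuously on `r`, and at `r = 0` we have `w₀ = 0` and `v₀ = √(2α/s)·u`, so `𝔄₀(λ) = (v₀·v₀ᴴ)₀ = M`.
-/

open Filter Topology

section

variable (A : Matrix (Fin 2) (Fin 2) ℂ) (v : Fin 2 → ℂ)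

lemma tl_smul (c : ℂ) : tl (c • A) = c • tl A := by
  simp only [tl, trace_smul, smul_sub, smul_smul]
  ring_nf

lemma trace_tl_s6 : (tl A).trace = 0 := by
  simp [tl, trace_sub, trace_smul]

lemma Matrix.IsHermitian.tl {A : Matrix (Fin 2) (Fin 2) ℂ} (hA : A.IsHermitian) :
    (tl A).IsHermitian :=
  hA.sub (isHermitian_one.smul (by
    rw [IsSelfAdjoint, star_div₀, ← trace_conjTranspose, hA.eq, star_ofNat]))

@[fun_prop]
lemma continuous_tl : Continuous tl := by
  unfold tl
  fun_prop

lemma vvH_eq_vecMulVec : vvH v = vecMulVec v (star v) := rfl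

lemma isHermitian_vvH : (vvH v).IsHermitian := by
  rw [vvH_eq_vecMulVec, IsHermitian, conjTranspose_vecMulVec, star_star]

lemma vvH_smul (c : ℂ) : vvH (c • v) = (normSq c : ℂ) • vvH v := by
  ext i j
  simp only [vvH, of_apply, Pi.smul_apply, Matrix.smul_apply, smul_eq_mul, map_mul,
    ← Complex.mul_conj]
  ring

lemma vvH_mulVec_self : vvH v *ᵥ v = (vvH v).trace • v := by
  rw [vvH_eq_vecMulVec, vecMulVec_mulVec, trace_vecMulVec, dotProduct_comm, op_smul_eq_smul]

lemma tl_vvH_mulVec_self : tl (vvH v) *ᵥ v = ((vvH v).trace / 2) • v := by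
  rw [tl, sub_mulVec, vvH_mulVec_self, smul_mulVec, one_mulVec, ← sub_smul]
  ring_nf

lemma det_tl_vvH : (tl (vvH v)).det = -(vvH v).trace ^ 2 / 4 := by
  simp [det_fin_two, tl, vvH, trace_fin_two]
  ring

end

lemma trace_vvH_vec2 (x y : ℂ) : (vvH ![x, y]).trace = ((normSq x + normSq y : ℝ) : ℂ) := by
  simp [trace_fin_two, vvH, Complex.mul_conj]

lemma two_smul_tl_vvH_vec2 (x y : ℂ) : (2 : ℂ) • tl (vvH ![x, y]) =
    !![((normSq x - normSq y : ℝ) : ℂ), 2 * x * conj y;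
       2 * y * conj x, ((normSq y - normSq x : ℝ) : ℂ)] := by
  ext i j
  fin_cases i <;> fin_cases j <;> simp [tl, vvH, trace_fin_two, Complex.mul_conj] <;> ring

lemma normSq_add_normSq_pos {x y : ℂ} (h : (x, y) ≠ (0, 0)) : 0 < normSq x + normSq y := by
  rcases eq_or_ne x 0 with rfl | hx
  · have hy : y ≠ 0 := by rintro rfl; exact h rfl
    simpa using normSq_pos.2 hy
  · exact add_pos_of_pos_of_nonneg (normSq_pos.2 hx) (normSq_nonneg y)

lemma frakA_zero_right (v : Fin 2 → ℂ) (l : ℂ) : frakA v 0 l = tl (vvH v) := by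
  have hv0 : outer v 0 = 0 := by ext; simp [outer]
  have h0w : wHw 0 = 0 := by ext; simp [wHw]
  simp [frakA, hv0, h0w, tl]

lemma Continuous.frakA {X : Type*} [TopologicalSpace X] {v w : X → Fin 2 → ℂ}
    (hv : Continuous v) (hw : Continuous w) (l : ℂ) :
    Continuous fun r => frakA (v r) (w r) l := by
  unfold _root_.frakA outer vvH wHw
  fun_prop

lemma tendsto_frakA_of_eq_zero {X : Type*} [TopologicalSpace X] {v w : X → Fin 2 → ℂ}
    (hv : Continuous v) (hw : Continuous w) {x₀ : X} (hw0 : w x₀ = 0) (l : ℂ) :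
    Tendsto (fun r => frakA (v r) (w r) l) (𝓝 x₀) (𝓝 (tl (vvH (v x₀)))) := by
  have h := (hv.frakA hw l).tendsto x₀
  rwa [hw0, frakA_zero_right] at h

/-- The limiting matrix `M = (α/s)·[[|x|²−|y|², 2x·conj y],[2y·conj x, |y|²−|x|²]]` is
Hermitian, traceless, has determinant `−α²` and eigenvector `(x,y)ᵀ` with eigenvalue `α`;
moreover the loops `𝔄_r(λ)` built from `v_r = √((2α+r²s)/s)·(x,y)ᵀ`, `w_r = r·(y,−x)`
converge entrywise to `M` as `r → 0⁺`, for each fixed `λ ≠ 0`. -/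
theorem stmt6 (α : ℝ) (hα : 0 < α) (x y : ℂ) (hxy : (x, y) ≠ (0, 0)) :
    let s : ℝ := Complex.normSq x + Complex.normSq y
    let M : Matrix (Fin 2) (Fin 2) ℂ := ((α / s : ℝ) : ℂ) •
      !![((Complex.normSq x - Complex.normSq y : ℝ) : ℂ), 2 * x * conj y;
         2 * y * conj x, ((Complex.normSq y - Complex.normSq x : ℝ) : ℂ)]
    Mᴴ = M ∧ M.trace = 0 ∧ M.det = -(α : ℂ) ^ 2 ∧
    M.mulVec ![x, y] = (α : ℂ) • ![x, y] ∧
    ∀ l : ℂ, l ≠ 0 → ∀ i j : Fin 2,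
      Filter.Tendsto
        (fun r : ℝ =>
          frakA (fun i' => (Real.sqrt ((2 * α + r ^ 2 * s) / s) : ℂ) * ![x, y] i')
                (fun i' => (r : ℂ) * ![y, -x] i') l i j)
        (nhdsWithin 0 (Set.Ioi 0)) (nhds (M i j)) := by
  intro s M
  have hs : 0 < s := normSq_add_normSq_pos hxy
  have hs' : (s : ℂ) ≠ 0 := ofReal_ne_zero.2 hs.ne'
  have htr : (vvH ![x, y]).trace = s := trace_vvH_vec2 x y
  have hM : M = ((2 * α / s : ℝ) : ℂ) • tl (vvH ![x, y]) := by
    rw [show M = ((α / s : ℝ) : ℂ) • _ from rfl, ← two_smul_tl_vvH_vec2, smul_smul]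
    push_cast
    ring_nf
  refine ⟨?_, ?_, ?_, ?_, fun l _ i j => ?_⟩
  · rw [hM]
    exact (isHermitian_vvH _).tl.smul (Complex.conj_ofReal _)
  · rw [hM, trace_smul, trace_tl_s6, smul_zero]
  · rw [hM, det_smul, det_tl_vvH, htr, Fintype.card_fin]
    push_cast
    field_simp
    ring
  · rw [hM, smul_mulVec, tl_vvH_mulVec_self, htr, smul_smul]
    congr 1
    push_cast
    field_simp
  · have h := tendsto_frakA_of_eq_zero (x₀ := 0) (l := l)
      (v := fun r : ℝ => (Real.sqrt ((2 * α + r ^ 2 * s) / s) : ℂ) • ![x, y])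
      (w := fun r : ℝ => (r : ℂ) • ![y, -x]) (by fun_prop) (by fun_prop) (by simp)
    have hlim : tl (vvH ((Real.sqrt ((2 * α + 0 ^ 2 * s) / s) : ℂ) • ![x, y])) = M := by
      rw [vvH_smul, tl_smul, normSq_ofReal, Real.mul_self_sqrt (by positivity), hM]
      norm_num
    rw [hlim] at h
    exact tendsto_pi_nhds.1 (tendsto_pi_nhds.1 (h.mono_left nhdsWithin_le_nhds) i) j
end
end
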